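/- arXiv:2005.04887 — 12 statements merged into one kernel-verified Lean document; each statement's English description precedes it below -/
import Mathlib

section
/- For a 2×2 positive semidefinite Hermitian matrix ρ with trace 1 (a qubit density matrix), written with entries ρ₀₀, ρ₁₁ on the diagonal and ρ₀₁ off-diagonal, if ρ₀₀ ≥ |ρ₀₁| and ρ₁₁ ≥ |ρ₀₁|, then the maximum value of λ₀ + λ₁ over nonnegative reals λ₀, λ₁ such that ρ - λ₀|0⟩⟨0| - λ₁|1⟩⟨1| is positive semidefinite equals 1 - 2|ρ₀₁|. -/
open Matrix ComplexOrder

/-!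
Subtracting `λ₀|0⟩⟨0| + λ₁|1⟩⟨1|` leaves the off-diagonal entry `z = ρ₀₁` untouched, and a Hermitian
`2 × 2` matrix `!![a, z; z̄, b]` is positive semidefinite iff `a, b ≥ 0` and `|z|² ≤ a b`. By AM–GM the
latter forces `a + b ≥ 2|z|`, i.e. `λ₀ + λ₁ ≤ 1 - 2|z|`, with equality for `a = b = |z|`.
-/

theorem two_mul_mul_mul_le_add_of_sq_le_mul {a b c : ℝ} (ha : 0 ≤ a) (hb : 0 ≤ b) (hc : c ^ 2 ≤ a * b)
    (s t : ℝ) : 2 * c * s * t ≤ a * s ^ 2 + b * t ^ 2 := by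
  rcases ha.eq_or_lt with rfl | ha
  · have : c = 0 := by nlinarith
    subst this; nlinarith
  · -- `a (a s² + b t² - 2 c s t) = (a s - c t)² + (a b - c²) t²`
    have h : 0 ≤ a * (a * s ^ 2 + b * t ^ 2 - 2 * c * s * t) := by
      nlinarith [sq_nonneg (a * s - c * t), sq_nonneg t]
    nlinarith [nonneg_of_mul_nonneg_right h ha]

theorem Matrix.IsHermitian.eq_fin_two {A : Matrix (Fin 2) (Fin 2) ℂ} (hA : A.IsHermitian) :
    A = !![((A 0 0).re : ℂ), A 0 1; starRingEnd ℂ (A 0 1), ((A 1 1).re : ℂ)] := by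
  have hdiag (i : Fin 2) : ((A i i).re : ℂ) = A i i := Complex.conj_eq_iff_re.mp (hA.apply i i)
  ext i j
  fin_cases i <;> fin_cases j
  · exact (hdiag 0).symm
  · rfl
  · exact (hA.apply 1 0).symm
  · exact (hdiag 1).symm

theorem dotProduct_mulVec_fin_two (a b : ℝ) (z : ℂ) (x : Fin 2 → ℂ) :
    star x ⬝ᵥ !![(a : ℂ), z; starRingEnd ℂ z, (b : ℂ)] *ᵥ x
      = ((a * ‖x 0‖ ^ 2 + b * ‖x 1‖ ^ 2 + 2 * (starRingEnd ℂ (x 0) * z * x 1).re : ℝ) : ℂ) := by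
  simp only [dotProduct, mulVec, Fin.sum_univ_two]
  apply Complex.ext <;>
    simp [← Complex.normSq_eq_norm_sq, Complex.normSq_apply, Complex.mul_re, Complex.mul_im] <;> ring

theorem Matrix.posSemidef_fin_two_iff {a b : ℝ} {z : ℂ} :
    (!![(a : ℂ), z; starRingEnd ℂ z, (b : ℂ)]).PosSemidef ↔ 0 ≤ a ∧ 0 ≤ b ∧ ‖z‖ ^ 2 ≤ a * b := by
  constructor
  · intro h
    have hdet := h.det_nonneg
    rw [det_fin_two_of, Complex.mul_conj', ← Complex.ofReal_mul, ← Complex.ofReal_pow,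
      ← Complex.ofReal_sub, Complex.zero_le_real, sub_nonneg] at hdet
    exact ⟨Complex.zero_le_real.mp (h.diag_nonneg (i := 0)),
      Complex.zero_le_real.mp (h.diag_nonneg (i := 1)), hdet⟩
  · rintro ⟨ha, hb, hz⟩
    refine .of_dotProduct_mulVec_nonneg ?_ fun x => ?_
    · ext i j
      fin_cases i <;> fin_cases j <;> simp
    · rw [dotProduct_mulVec_fin_two, Complex.zero_le_real]
      have hre : -(‖x 0‖ * ‖z‖ * ‖x 1‖) ≤ (starRingEnd ℂ (x 0) * z * x 1).re := by
        simpa using neg_le_of_abs_le (Complex.abs_re_le_norm (starRingEnd ℂ (x 0) * z * x 1))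
      linarith [two_mul_mul_mul_le_add_of_sq_le_mul ha hb hz ‖x 0‖ ‖x 1‖]

theorem stmt_0 (ρ : Matrix (Fin 2) (Fin 2) ℂ)
    (hpsd : ρ.PosSemidef) (htr : ρ.trace = 1)
    (h00 : ‖ρ 0 1‖ ≤ (ρ 0 0).re)
    (h11 : ‖ρ 0 1‖ ≤ (ρ 1 1).re) :
    IsGreatest {s : ℝ | ∃ l0 l1 : ℝ, 0 ≤ l0 ∧ 0 ≤ l1 ∧ s = l0 + l1 ∧
        (ρ - (l0 : ℂ) • Matrix.single (0 : Fin 2) 0 (1 : ℂ)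
           - (l1 : ℂ) • Matrix.single (1 : Fin 2) 1 (1 : ℂ)).PosSemidef}
      (1 - 2 * ‖ρ 0 1‖) := by
  have hsub (l0 l1 : ℝ) : ρ - (l0 : ℂ) • single 0 0 1 - (l1 : ℂ) • single 1 1 1 =
      !![(((ρ 0 0).re - l0 : ℝ) : ℂ), ρ 0 1; starRingEnd ℂ (ρ 0 1), (((ρ 1 1).re - l1 : ℝ) : ℂ)] := by
    conv_lhs => rw [hpsd.isHermitian.eq_fin_two]
    ext i j
    fin_cases i <;> fin_cases j <;> simp
  have htr' : (ρ 0 0).re + (ρ 1 1).re = 1 := by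
    simpa [trace_fin_two] using congrArg Complex.re htr
  constructor
  · refine ⟨(ρ 0 0).re - ‖ρ 0 1‖, (ρ 1 1).re - ‖ρ 0 1‖, by linarith, by linarith, by linarith, ?_⟩
    rw [hsub, posSemidef_fin_two_iff, sub_sub_cancel, sub_sub_cancel]
    exact ⟨norm_nonneg _, norm_nonneg _, (sq _).le⟩
  · rintro s ⟨l0, l1, -, -, rfl, h⟩
    obtain ⟨ha, hb, hz⟩ := posSemidef_fin_two_iff.mp (hsub l0 l1 ▸ h)
    linarith [two_mul_le_add_of_sq_le_mul ha hb hz]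
end

section
/- For a 2×2 density matrix ρ with |ρ₀₁| ≥ min{ρ₀₀, ρ₁₁} (the absolute value of the off-diagonal entry is at least one of the diagonal entries), the coherence weight satisfies C_w(ρ) = 1 - det(ρ)/min{ρ₀₀, ρ₁₁}, i.e., the maximum of λ₀ + λ₁ over nonnegative λ₀, λ₁ with ρ - λ₀|0⟩⟨0| - λ₁|1⟩⟨1| ⪰ 0 equals det(ρ)/min{ρ₀₀, ρ₁₁}. -/
/-!
Write `ρ = !![a, b; b̄, c]`. A Hermitian `2 × 2` matrix is positive semidefinite iff its diagonal
and its determinant are nonnegative, so `ρ - diag(l₀, l₁) ⪰ 0` iff `l₀ ≤ a`, `l₁ ≤ c` and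
`|b|² ≤ (a - l₀)(c - l₁)`. Say `a ≤ c`. For fixed `x = a - l₀` the best choice is
`c - l₁ = |b|² / x`, and `x + |b|² / x` decreases on `(0, |b|]`; the hypothesis `a ≤ |b|` puts the
whole range `0 < x ≤ a` there, so the optimum is `l₀ = 0`, `l₁ = c - |b|² / a`.
-/

open Matrix ComplexOrder

-- The sums `l₀ + l₁` allowed by the criterion above, with `β = |b|²`.
def feasibleDiagWeights (a c β : ℝ) : Set ℝ :=
  {s | ∃ l₀ l₁ : ℝ, 0 ≤ l₀ ∧ 0 ≤ l₁ ∧ s = l₀ + l₁ ∧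
    0 ≤ a - l₀ ∧ 0 ≤ c - l₁ ∧ β ≤ (a - l₀) * (c - l₁)}

lemma feasibleDiagWeights_comm (a c β : ℝ) :
    feasibleDiagWeights a c β = feasibleDiagWeights c a β := by
  ext s
  constructor <;>
  · rintro ⟨l₀, l₁, h₀, h₁, rfl, hx, hy, hβ⟩
    exact ⟨l₁, l₀, h₁, h₀, add_comm _ _, hy, hx, by rwa [mul_comm]⟩

lemma isGreatest_feasibleDiagWeights_of_sq_le {a c β : ℝ} (ha : 0 < a) (haβ : a ^ 2 ≤ β)
    (hβ : β ≤ a * c) : IsGreatest (feasibleDiagWeights a c β) (c - β / a) := by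
  have hβ₀ : 0 < β := (pow_pos ha 2).trans_le haβ
  refine ⟨⟨0, c - β / a, le_rfl, sub_nonneg.2 ((div_le_iff₀' ha).2 hβ), by ring,
    by simpa using ha.le, by simpa using (div_pos hβ₀ ha).le, le_of_eq (by field_simp; ring)⟩, ?_⟩
  rintro _ ⟨l₀, l₁, h₀, -, rfl, -, hy, hxy⟩
  have hx : 0 < a - l₀ := by nlinarith
  have hax : a * (a - l₀) ≤ β := by nlinarith
  -- `(a - l₀) * (a * (c - l₁ - l₀) - β) ≥ l₀ * (β - a * (a - l₀)) ≥ 0`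
  have : β / a ≤ c - l₁ - l₀ := by
    rw [div_le_iff₀' ha]
    nlinarith [mul_nonneg h₀ (sub_nonneg.2 hax)]
  linarith

lemma isGreatest_feasibleDiagWeights {a c β : ℝ} (hm : 0 < min a c) (hmβ : min a c ^ 2 ≤ β)
    (hβ : β ≤ a * c) : IsGreatest (feasibleDiagWeights a c β) ((a * c - β) / min a c) := by
  rcases le_total a c with hac | hca
  · rw [min_eq_left hac] at *
    convert isGreatest_feasibleDiagWeights_of_sq_le hm hmβ hβ using 1
    field_simp
  · rw [min_eq_right hca] at *
    rw [feasibleDiagWeights_comm]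
    convert isGreatest_feasibleDiagWeights_of_sq_le hm hmβ (mul_comm a c ▸ hβ) using 1
    field_simp

namespace Matrix

variable {𝕜 : Type*} [RCLike 𝕜]

open RCLike in
lemma IsHermitian.eq_fin_two_s1 {A : Matrix (Fin 2) (Fin 2) 𝕜} (hA : A.IsHermitian) :
    A = !![(re (A 0 0) : 𝕜), A 0 1; star (A 0 1), (re (A 1 1) : 𝕜)] := by
  ext i j
  fin_cases i <;> fin_cases j
  · exact (hA.coe_re_apply_self 0).symm
  · rfl
  · exact (hA.apply 1 0).symm
  · exact (hA.coe_re_apply_self 1).symm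

lemma det_fin_two_hermitian (a c : ℝ) (b : 𝕜) :
    (!![(a : 𝕜), b; star b, (c : 𝕜)]).det = ((a * c - ‖b‖ ^ 2 : ℝ) : 𝕜) := by
  rw [det_fin_two_of, RCLike.star_def, RCLike.mul_conj]
  push_cast
  ring

lemma posSemidef_fin_two_iff_s1 {a c : ℝ} {b : 𝕜} :
    (!![(a : 𝕜), b; star b, (c : 𝕜)]).PosSemidef ↔ 0 ≤ a ∧ 0 ≤ c ∧ ‖b‖ ^ 2 ≤ a * c := by
  constructor
  · intro h
    have h00 := h.diag_nonneg (i := 0)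
    have h11 := h.diag_nonneg (i := 1)
    have hdet := h.det_nonneg
    simp only [of_apply, cons_val', cons_val_zero, cons_val_one, empty_val', cons_val_fin_one]
      at h00 h11
    rw [det_fin_two_hermitian, RCLike.ofReal_nonneg, sub_nonneg] at hdet
    exact ⟨RCLike.ofReal_nonneg.1 h00, RCLike.ofReal_nonneg.1 h11, hdet⟩
  rintro ⟨ha, hc, hb⟩
  rcases ha.eq_or_lt with rfl | ha
  · obtain rfl : b = 0 := by simpa using hb
    convert PosSemidef.diagonal (d := ![(0 : 𝕜), (c : 𝕜)]) ?_
    · ext i j; fin_cases i <;> fin_cases j <;> simp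
    · exact Fin.forall_fin_two.2 ⟨le_rfl, RCLike.ofReal_nonneg.2 hc⟩
  -- Schur complement: the matrix is `a⁻¹ w wᴴ + diag(0, c - ‖b‖² / a)` with `w = (a, b̄)`.
  have hschur : 0 ≤ c - ‖b‖ ^ 2 / a := sub_nonneg.2 ((div_le_iff₀' ha).2 hb)
  convert ((posSemidef_vecMulVec_self_star ![(a : 𝕜), star b]).smul (inv_nonneg.2 ha.le)).add
    (PosSemidef.diagonal (d := ![0, ((c - ‖b‖ ^ 2 / a : ℝ) : 𝕜)]) ?_)
  · ext i j
    fin_cases i <;> fin_cases j <;>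
      simp only [add_apply, smul_apply, vecMulVec_apply, diagonal_apply, Pi.star_apply, of_apply,
        cons_val', empty_val', cons_val_fin_one, RCLike.real_smul_eq_coe_mul, RCLike.star_def] <;>
      simp [RCLike.conj_mul] <;>
      field_simp
    ring
  · exact Fin.forall_fin_two.2 ⟨le_rfl, RCLike.ofReal_nonneg.2 hschur⟩

lemma fin_two_sub_smul_single (a c l₀ l₁ : ℝ) (b : 𝕜) :
    !![(a : 𝕜), b; star b, (c : 𝕜)] - (l₀ : 𝕜) • single 0 0 1 - (l₁ : 𝕜) • single 1 1 1 =
      !![((a - l₀ : ℝ) : 𝕜), b; star b, ((c - l₁ : ℝ) : 𝕜)] := by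
  ext i j
  fin_cases i <;> fin_cases j <;> simp [RCLike.real_smul_eq_coe_mul]

lemma isGreatest_sum_diag_weights_fin_two {a c : ℝ} {b : 𝕜} (hm : 0 < min a c)
    (hb : min a c ≤ ‖b‖) (hA : (!![(a : 𝕜), b; star b, (c : 𝕜)]).PosSemidef) :
    IsGreatest {s : ℝ | ∃ l₀ l₁ : ℝ, 0 ≤ l₀ ∧ 0 ≤ l₁ ∧ s = l₀ + l₁ ∧
        (!![(a : 𝕜), b; star b, (c : 𝕜)] - (l₀ : 𝕜) • single 0 0 1
          - (l₁ : 𝕜) • single 1 1 1).PosSemidef}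
      (RCLike.re (!![(a : 𝕜), b; star b, (c : 𝕜)]).det / min a c) := by
  convert isGreatest_feasibleDiagWeights hm (pow_le_pow_left₀ hm.le hb 2)
    (posSemidef_fin_two_iff_s1.1 hA).2.2 using 1
  · ext s
    simp only [Set.mem_ofPred_eq, fin_two_sub_smul_single, posSemidef_fin_two_iff_s1]
    rfl
  · rw [det_fin_two_hermitian, RCLike.ofReal_re]

end Matrix

theorem stmt_1_general (ρ : Matrix (Fin 2) (Fin 2) ℂ)
    (hpsd : ρ.PosSemidef)
    (hmin : 0 < min (ρ 0 0).re (ρ 1 1).re)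
    (hoff : min (ρ 0 0).re (ρ 1 1).re ≤ ‖ρ 0 1‖) :
    IsGreatest {s : ℝ | ∃ l0 l1 : ℝ, 0 ≤ l0 ∧ 0 ≤ l1 ∧ s = l0 + l1 ∧
        (ρ - (l0 : ℂ) • Matrix.single (0 : Fin 2) 0 (1 : ℂ)
           - (l1 : ℂ) • Matrix.single (1 : Fin 2) 1 (1 : ℂ)).PosSemidef}
      (ρ.det.re / min (ρ 0 0).re (ρ 1 1).re) := by
  obtain ⟨a, c, b, rfl⟩ : ∃ (a c : ℝ) (b : ℂ), ρ = !![(a : ℂ), b; star b, (c : ℂ)] :=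
    ⟨_, _, _, hpsd.isHermitian.eq_fin_two_s1⟩
  exact isGreatest_sum_diag_weights_fin_two hmin hoff hpsd

theorem stmt_1 (ρ : Matrix (Fin 2) (Fin 2) ℂ)
    (hpsd : ρ.PosSemidef) (htr : ρ.trace = 1)
    (hmin : 0 < min (ρ 0 0).re (ρ 1 1).re)
    (hoff : min (ρ 0 0).re (ρ 1 1).re ≤ ‖ρ 0 1‖) :
    IsGreatest {s : ℝ | ∃ l0 l1 : ℝ, 0 ≤ l0 ∧ 0 ≤ l1 ∧ s = l0 + l1 ∧
        (ρ - (l0 : ℂ) • Matrix.single (0 : Fin 2) 0 (1 : ℂ)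
           - (l1 : ℂ) • Matrix.single (1 : Fin 2) 1 (1 : ℂ)).PosSemidef}
      (ρ.det.re / min (ρ 0 0).re (ρ 1 1).re) :=
  stmt_1_general ρ hpsd hmin hoff
end

section
/- For any qubit density matrix ρ, the coherence weight and the linear-entropy mixedness satisfy the trade-off C_w(ρ)² + M(ρ) ≤ 1, where M(ρ) = 2(1 - Tr(ρ²)). Equivalently, C_w(ρ) is at most the length of the Bloch vector of ρ. -/
/-!
Write `r = |u|`. The smaller eigenvalue `(1 - r) / 2` of `ρ` is a feasible choice
`λ₀ = λ₁ = (1 - r) / 2` in the supremum defining `C_w`, because `ρ - λ • 1 ⪰ 0`; hence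
`C_w(ρ) ≤ 1 - 2λ = r`. For a `2 × 2` matrix of trace one, `r² = 1 - 4 det ρ` and
`Tr ρ² = 1 - 2 det ρ`, and a Hermitian `2 × 2` matrix is positive semidefinite as soon as its
trace and determinant are nonnegative.
-/

open Matrix ComplexOrder

/-- The coherence weight of a density matrix: `1` minus the supremum of `∑ᵢ λᵢ`
over nonnegative `λᵢ` with `ρ - ∑ᵢ λᵢ|i⟩⟨i| ⪰ 0`. -/
noncomputable def coherenceWeight {n : Type*} [Fintype n] [DecidableEq n]
    (ρ : Matrix n n ℂ) : ℝ :=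
  1 - sSup {s : ℝ | ∃ lam : n → ℝ, (∀ i, 0 ≤ lam i) ∧ s = ∑ i, lam i ∧
      (ρ - Matrix.diagonal (fun i => (lam i : ℂ))).PosSemidef}

namespace Matrix

section FinTwo

variable {R : Type*} [CommRing R]

theorem det_sub_smul_one_fin_two (A : Matrix (Fin 2) (Fin 2) R) (t : R) :
    (A - t • 1).det = A.det - t * A.trace + t ^ 2 := by
  simp only [det_fin_two, trace_fin_two, sub_apply, smul_apply, one_apply_eq,
    one_apply_ne Fin.zero_ne_one, one_apply_ne Fin.zero_ne_one.symm]
  ring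

theorem trace_mul_self_fin_two (A : Matrix (Fin 2) (Fin 2) R) :
    (A * A).trace = A.trace ^ 2 - 2 * A.det := by
  simp only [trace_fin_two, det_fin_two, mul_apply, Fin.sum_univ_two]
  ring

variable {𝕜 : Type*} [RCLike 𝕜] {A : Matrix (Fin 2) (Fin 2) 𝕜}

theorem IsHermitian.four_mul_det_le_trace_sq (hA : A.IsHermitian) :
    4 * A.det ≤ A.trace ^ 2 := by
  rw [hA.trace_eq_sum_eigenvalues, hA.det_eq_prod_eigenvalues, Fin.sum_univ_two,
    Fin.prod_univ_two]
  norm_cast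
  nlinarith [sq_nonneg (hA.eigenvalues 0 - hA.eigenvalues 1)]

theorem IsHermitian.posSemidef_of_trace_nonneg_of_det_nonneg (hA : A.IsHermitian)
    (htr : 0 ≤ A.trace) (hdet : 0 ≤ A.det) : A.PosSemidef := by
  rw [hA.trace_eq_sum_eigenvalues, Fin.sum_univ_two] at htr
  rw [hA.det_eq_prod_eigenvalues, Fin.prod_univ_two] at hdet
  norm_cast at htr hdet
  rw [hA.posSemidef_iff_eigenvalues_nonneg]
  refine Pi.le_def.2 (Fin.forall_fin_two.2 ⟨?_, ?_⟩) <;> simp only [Pi.zero_apply] <;> nlinarith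

end FinTwo

-- `(1 - r) / 2` is the smaller root of the characteristic polynomial `t² - t + D` of `ρ`.
theorem IsHermitian.posSemidef_sub_smul_one_of_trace_eq_one {ρ : Matrix (Fin 2) (Fin 2) ℂ}
    (hρ : ρ.IsHermitian) (htr : ρ.trace = 1) {D r : ℝ} (hdet : ρ.det = D)
    (hr : r ^ 2 = 1 - 4 * D) (hr0 : 0 ≤ r) :
    (ρ - (((1 - r) / 2 : ℝ) : ℂ) • 1).PosSemidef := by
  refine (hρ.sub (isHermitian_one.smul (Complex.conj_ofReal _))
    ).posSemidef_of_trace_nonneg_of_det_nonneg ?_ ?_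
  · rw [trace_sub, trace_smul, trace_one, htr, Fintype.card_fin, smul_eq_mul]
    have htrace : (1 : ℂ) - (((1 - r) / 2 : ℝ) : ℂ) * (2 : ℕ) = r := by push_cast; ring
    rw [htrace]
    exact_mod_cast hr0
  · rw [det_sub_smul_one_fin_two, htr, hdet, mul_one]
    have hdet' : D - (1 - r) / 2 + ((1 - r) / 2) ^ 2 = 0 := by linear_combination hr / 4
    exact_mod_cast hdet'.ge

end Matrix

section CoherenceWeight

variable {n : Type*} [Fintype n] [DecidableEq n] {ρ : Matrix n n ℂ}

theorem sum_le_re_trace_of_posSemidef_sub_diagonal {lam : n → ℝ}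
    (h : (ρ - diagonal fun i => (lam i : ℂ)).PosSemidef) : ∑ i, lam i ≤ ρ.trace.re := by
  have := (Complex.nonneg_iff.1 h.trace_nonneg).1
  rw [trace_sub, trace_diagonal, Complex.sub_re, Complex.re_sum] at this
  simpa only [Complex.ofReal_re, sub_nonneg] using this

theorem coherenceWeight_nonneg (htr : ρ.trace = 1) : 0 ≤ coherenceWeight ρ := by
  rw [coherenceWeight, sub_nonneg]
  refine Real.sSup_le ?_ zero_le_one
  rintro s ⟨lam, -, rfl, h⟩
  simpa [htr] using sum_le_re_trace_of_posSemidef_sub_diagonal h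

theorem coherenceWeight_le_of_posSemidef_sub_smul_one {t : ℝ} (ht : 0 ≤ t)
    (h : (ρ - (t : ℂ) • 1).PosSemidef) : coherenceWeight ρ ≤ 1 - Fintype.card n * t := by
  rw [smul_one_eq_diagonal] at h
  rw [coherenceWeight, sub_le_sub_iff_left]
  refine le_csSup ⟨ρ.trace.re, ?_⟩ ⟨fun _ => t, fun _ => ht, by simp, h⟩
  rintro s ⟨lam, -, rfl, h'⟩
  exact sum_le_re_trace_of_posSemidef_sub_diagonal h'

end CoherenceWeight

theorem stmt_2 (ρ : Matrix (Fin 2) (Fin 2) ℂ)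
    (hpsd : ρ.PosSemidef) (htr : ρ.trace = 1) :
    (coherenceWeight ρ) ^ 2 + 2 * (1 - ((ρ * ρ).trace).re) ≤ 1 := by
  obtain ⟨D, hD0, hdet⟩ := RCLike.nonneg_iff_exists_ofReal.1 hpsd.det_nonneg
  replace hdet : ρ.det = D := hdet.symm
  have hD : 4 * D ≤ 1 := by
    have := hpsd.isHermitian.four_mul_det_le_trace_sq
    rw [htr, hdet, one_pow] at this
    exact_mod_cast this
  obtain ⟨r, hr0, hr⟩ : ∃ r : ℝ, 0 ≤ r ∧ r ^ 2 = 1 - 4 * D :=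
    ⟨√(1 - 4 * D), Real.sqrt_nonneg _, Real.sq_sqrt (by linarith)⟩
  have hC : coherenceWeight ρ ≤ r := by
    have := coherenceWeight_le_of_posSemidef_sub_smul_one (t := (1 - r) / 2) (by nlinarith)
      (hpsd.isHermitian.posSemidef_sub_smul_one_of_trace_eq_one htr hdet hr hr0)
    simp only [Fintype.card_fin, Nat.cast_ofNat] at this
    linarith
  have htr2 : ((ρ * ρ).trace).re = 1 - 2 * D := by
    rw [trace_mul_self_fin_two, htr, hdet]
    simp
  rw [htr2]
  nlinarith [coherenceWeight_nonneg htr]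
end

section
/- For any qubit density matrix ρ, the coherence weight is at least the l₁-norm of coherence: C_w(ρ) ≥ C_{l₁}(ρ) = 2|ρ₀₁|. -/
/-!
Subtracting a diagonal matrix leaves the off-diagonal entry `ρᵢⱼ` unchanged, and in a
positive semidefinite matrix `2‖Aᵢⱼ‖ ≤ Aᵢᵢ + Aⱼⱼ` (the `2 × 2` principal minor at `i, j` is
nonnegative, then AM–GM), which is at most the trace. So every feasible `λ` has
`∑ᵢ λᵢ = tr ρ - tr (ρ - diag λ) ≤ 1 - 2‖ρᵢⱼ‖`; since `λ = 0` is feasible, the supremum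
obeys the same bound.
-/

open Matrix ComplexOrder

namespace Matrix.PosSemidef

variable {n 𝕜 : Type*} [RCLike 𝕜] {A : Matrix n n 𝕜}

lemma norm_apply_sq_le_re_mul_re (hA : A.PosSemidef) (i j : n) :
    ‖A i j‖ ^ 2 ≤ RCLike.re (A i i) * RCLike.re (A j j) := by
  have hdet := (hA.submatrix ![i, j]).det_nonneg
  rw [det_fin_two] at hdet
  simp only [submatrix_apply, cons_val_zero, cons_val_one] at hdet
  rw [← hA.isHermitian.apply j i, RCLike.star_def, RCLike.mul_conj] at hdet
  have hii := (RCLike.nonneg_iff.mp (hA.diag_nonneg (i := i))).2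
  have hjj := (RCLike.nonneg_iff.mp (hA.diag_nonneg (i := j))).2
  have hre := (RCLike.nonneg_iff.mp hdet).1
  rw [map_sub, RCLike.mul_re, hii, hjj, ← RCLike.ofReal_pow, RCLike.ofReal_re] at hre
  linarith

lemma two_mul_norm_apply_le_re_add_re (hA : A.PosSemidef) (i j : n) :
    2 * ‖A i j‖ ≤ RCLike.re (A i i) + RCLike.re (A j j) := by
  have hi : 0 ≤ RCLike.re (A i i) := (RCLike.nonneg_iff.mp hA.diag_nonneg).1
  have hj : 0 ≤ RCLike.re (A j j) := (RCLike.nonneg_iff.mp hA.diag_nonneg).1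
  nlinarith [hA.norm_apply_sq_le_re_mul_re i j, norm_nonneg (A i j),
    sq_nonneg (RCLike.re (A i i) - RCLike.re (A j j))]

variable [Fintype n]

lemma re_apply_add_re_apply_le_re_trace (hA : A.PosSemidef) {i j : n} (hij : i ≠ j) :
    RCLike.re (A i i) + RCLike.re (A j j) ≤ RCLike.re A.trace := by
  rw [trace, map_sum]
  exact Finset.add_le_sum (f := fun k ↦ RCLike.re (A k k))
    (fun _ _ ↦ (RCLike.nonneg_iff.mp hA.diag_nonneg).1) (Finset.mem_univ i) (Finset.mem_univ j) hij

lemma two_mul_norm_apply_le_re_trace (hA : A.PosSemidef) {i j : n} (hij : i ≠ j) :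
    2 * ‖A i j‖ ≤ RCLike.re A.trace :=
  (hA.two_mul_norm_apply_le_re_add_re i j).trans (hA.re_apply_add_re_apply_le_re_trace hij)

end Matrix.PosSemidef

variable {n : Type*} [Fintype n] [DecidableEq n]

lemma sum_add_two_mul_norm_le_re_trace {ρ : Matrix n n ℂ} {lam : n → ℝ}
    (hpsd : (ρ - diagonal (fun i => (lam i : ℂ))).PosSemidef) {i j : n} (hij : i ≠ j) :
    ∑ k, lam k + 2 * ‖ρ i j‖ ≤ ρ.trace.re := by
  have h := hpsd.two_mul_norm_apply_le_re_trace hij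
  rw [Matrix.sub_apply, diagonal_apply_ne _ hij, sub_zero, trace_sub, trace_diagonal] at h
  simp only [RCLike.re_to_complex, Complex.sub_re, Complex.re_sum, Complex.ofReal_re] at h
  linarith

lemma two_mul_norm_apply_le_coherenceWeight {ρ : Matrix n n ℂ} (hpsd : ρ.PosSemidef)
    (htr : ρ.trace = 1) {i j : n} (hij : i ≠ j) :
    2 * ‖ρ i j‖ ≤ coherenceWeight ρ := by
  have hbound : ∀ lam : n → ℝ, (ρ - diagonal (fun i => (lam i : ℂ))).PosSemidef →
      ∑ k, lam k ≤ 1 - 2 * ‖ρ i j‖ := fun lam h ↦ by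
    have := sum_add_two_mul_norm_le_re_trace h hij
    rw [htr, Complex.one_re] at this
    linarith
  have hzero : 0 ≤ 1 - 2 * ‖ρ i j‖ := by
    simpa using hbound 0 (by simpa using hpsd)
  rw [coherenceWeight, le_sub_comm]
  exact Real.sSup_le (by rintro s ⟨lam, -, rfl, h⟩; exact hbound lam h) hzero

theorem stmt_3 (ρ : Matrix (Fin 2) (Fin 2) ℂ)
    (hpsd : ρ.PosSemidef) (htr : ρ.trace = 1) :
    2 * ‖ρ 0 1‖ ≤ coherenceWeight ρ :=
  two_mul_norm_apply_le_coherenceWeight hpsd htr zero_ne_one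
end

section
/- Let a = √(u₁² + u₂²) and consider f(u₃) = 1 - (1 - u₁² - u₂² - u₃²)/(2(1 - u₃)) - a for u₃ ∈ [1 - a, √(1 - a²)] with 0 < a < 1 and u₃ < 1. Then f is convex on this interval, f(1-a) = 0, f'(1-a) = 0, and consequently f(u₃) ≥ 0 on the whole interval. -/
/-!
Substituting `a² = u₁² + u₂²` and clearing the denominator gives
`f(x) = (1 - x - a)² / (2(1 - x))`, which is nonnegative for `x < 1` and vanishes, together with
its derivative, at `x = 1 - a`. Convexity on `x < 1` follows from `f''(x) = a² / (1 - x)³`.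
-/

open Set

noncomputable def qubitGap (a x : ℝ) : ℝ := 1 - (1 - a ^ 2 - x ^ 2) / (2 * (1 - x)) - a

namespace qubitGap

variable {a x : ℝ}

theorem eq_sq_div (hx : x ≠ 1) : qubitGap a x = (1 - x - a) ^ 2 / (2 * (1 - x)) := by
  have : 1 - x ≠ 0 := sub_ne_zero.mpr hx.symm
  unfold qubitGap
  field_simp
  ring

theorem nonneg (hx : x < 1) : 0 ≤ qubitGap a x := by
  have : 0 < 1 - x := sub_pos.mpr hx
  rw [eq_sq_div hx.ne]
  positivity

theorem one_sub_self (ha : a ≠ 0) : qubitGap a (1 - a) = 0 := by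
  rw [eq_sq_div (by simpa using ha)]
  simp

theorem hasDerivAt (hx : x ≠ 1) :
    HasDerivAt (qubitGap a) (a ^ 2 / (2 * (1 - x) ^ 2) - 1 / 2) x := by
  have hx' : 1 - x ≠ 0 := sub_ne_zero.mpr hx.symm
  have hnum := (hasDerivAt_pow 2 x).const_sub (1 - a ^ 2)
  have hden := ((hasDerivAt_id' x).const_sub 1).const_mul 2
  refine (((hnum.div hden (by simpa using hx')).const_sub 1).sub_const a).congr_deriv ?_
  field_simp
  ring

theorem hasDerivAt_deriv (hx : x ≠ 1) :
    HasDerivAt (fun y => a ^ 2 / (2 * (1 - y) ^ 2) - 1 / 2) (a ^ 2 / (1 - x) ^ 3) x := by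
  have hx' : 1 - x ≠ 0 := sub_ne_zero.mpr hx.symm
  have hden := (((hasDerivAt_id' x).const_sub 1).fun_pow 2).const_mul 2
  refine (((hasDerivAt_const x (a ^ 2)).div hden (by positivity)).sub_const (1 / 2)).congr_deriv ?_
  field_simp
  ring

theorem deriv_one_sub_self (ha : a ≠ 0) : deriv (qubitGap a) (1 - a) = 0 := by
  rw [(hasDerivAt (by simpa using ha)).deriv, sub_sub_cancel]
  field_simp
  ring

theorem convexOn_Iio : ConvexOn ℝ (Iio 1) (qubitGap a) := by
  refine convexOn_of_hasDerivWithinAt2_nonneg (convex_Iio 1)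
    (f' := fun y => a ^ 2 / (2 * (1 - y) ^ 2) - 1 / 2) (f'' := fun y => a ^ 2 / (1 - y) ^ 3)
    (fun x hx => (hasDerivAt hx.out.ne).continuousAt.continuousWithinAt)
    (fun x hx => (hasDerivAt (interior_subset hx).out.ne).hasDerivWithinAt)
    (fun x hx => (hasDerivAt_deriv (interior_subset hx).out.ne).hasDerivWithinAt) fun x hx => ?_
  have : 0 < 1 - x := sub_pos.mpr (interior_subset hx).out
  positivity

end qubitGap

theorem Real.sqrt_one_sub_sq_lt_one {a : ℝ} (ha : a ≠ 0) : √(1 - a ^ 2) < 1 := by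
  rw [Real.sqrt_lt' one_pos, one_pow, sub_lt_self_iff]
  positivity

theorem stmt_4_general (u1 u2 : ℝ) (a : ℝ) (ha : a = Real.sqrt (u1 ^ 2 + u2 ^ 2))
    (ha0 : 0 < a)
    (f : ℝ → ℝ)
    (hf : f = fun u3 => 1 - (1 - u1 ^ 2 - u2 ^ 2 - u3 ^ 2) / (2 * (1 - u3)) - a) :
    ConvexOn ℝ (Set.Icc (1 - a) (Real.sqrt (1 - a ^ 2))) f ∧
    f (1 - a) = 0 ∧
    deriv f (1 - a) = 0 ∧
    ∀ u3 ∈ Set.Icc (1 - a) (Real.sqrt (1 - a ^ 2)), 0 ≤ f u3 := by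
  have hu : u1 ^ 2 + u2 ^ 2 = a ^ 2 := by rw [ha, Real.sq_sqrt (by positivity)]
  obtain rfl : f = qubitGap a := by
    subst hf
    funext x
    rw [qubitGap, ← hu]
    ring
  have hIcc : Icc (1 - a) √(1 - a ^ 2) ⊆ Iio 1 :=
    fun x hx => hx.2.trans_lt (Real.sqrt_one_sub_sq_lt_one ha0.ne')
  exact ⟨qubitGap.convexOn_Iio.subset hIcc (convex_Icc _ _), qubitGap.one_sub_self ha0.ne',
    qubitGap.deriv_one_sub_self ha0.ne', fun x hx => qubitGap.nonneg (hIcc hx)⟩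

theorem stmt_4 (u1 u2 : ℝ) (a : ℝ) (ha : a = Real.sqrt (u1 ^ 2 + u2 ^ 2))
    (ha0 : 0 < a) (ha1 : a < 1)
    (f : ℝ → ℝ)
    (hf : f = fun u3 => 1 - (1 - u1 ^ 2 - u2 ^ 2 - u3 ^ 2) / (2 * (1 - u3)) - a) :
    ConvexOn ℝ (Set.Icc (1 - a) (Real.sqrt (1 - a ^ 2))) f ∧
    f (1 - a) = 0 ∧
    deriv f (1 - a) = 0 ∧
    ∀ u3 ∈ Set.Icc (1 - a) (Real.sqrt (1 - a ^ 2)), 0 ≤ f u3 :=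
  stmt_4_general u1 u2 a ha ha0 f hf
end

section
/- Let ρ be a positive definite d×d Hermitian matrix and let |ψ₁⟩, |ψ₂⟩ be unit vectors with ⟨ψ₁|ρ⁻¹|ψ₂⟩ = 0. Then ρ - Λ₁|ψ₁⟩⟨ψ₁| - Λ₂|ψ₂⟩⟨ψ₂| is positive semidefinite for Λᵢ = ⟨ψᵢ|ρ⁻¹|ψᵢ⟩⁻¹, i = 1,2. -/
/-!
Put `A = ρ⁻¹`, which is positive semidefinite, and write a vector as `x = A w`. Then
`x* ρ x = w* A w` and `ψᵢ* x = ψᵢ* A w`, so the quadratic form of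
`ρ - Λ₁ |ψ₁⟩⟨ψ₁| - Λ₂ |ψ₂⟩⟨ψ₂|` at `x` is `w* A w - Σᵢ |ψᵢ* A w|² / ψᵢ* A ψᵢ`.
This is Bessel's inequality for the `A`-orthogonal pair `ψ₁, ψ₂` in the semi-inner product
`⟨u, v⟩_A = u* A v`: the quantity equals `⟨u, u⟩_A ≥ 0`, where `u` is `w` minus its
`A`-projections onto `ψ₁` and `ψ₂`.
-/

open Matrix ComplexOrder

namespace Matrix

lemma dotProduct_vecMulVec_mulVec {α n : Type*} [CommSemiring α] [Fintype n] (x y u v : n → α) :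
    x ⬝ᵥ vecMulVec u v *ᵥ y = (x ⬝ᵥ u) * (v ⬝ᵥ y) := by
  rw [dotProduct_mulVec, vecMul_vecMulVec, smul_dotProduct, smul_eq_mul]

variable {𝕜 n : Type*} [RCLike 𝕜] [Fintype n]

lemma IsHermitian.star_mulVec_dotProduct {A : Matrix n n 𝕜} (hA : A.IsHermitian) (v w : n → 𝕜) :
    star (A *ᵥ v) ⬝ᵥ w = star v ⬝ᵥ A *ᵥ w := by
  rw [star_mulVec, ← dotProduct_mulVec, hA.eq]

lemma IsHermitian.star_dotProduct_mulVec {A : Matrix n n 𝕜} (hA : A.IsHermitian) (v w : n → 𝕜) :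
    star (star v ⬝ᵥ A *ᵥ w) = star w ⬝ᵥ A *ᵥ v := by
  rw [star_dotProduct, star_star, hA.star_mulVec_dotProduct]

theorem PosSemidef.bessel_of_orthogonal {A : Matrix n n 𝕜} (hA : A.PosSemidef) {v₁ v₂ : n → 𝕜}
    (h : star v₁ ⬝ᵥ A *ᵥ v₂ = 0) (w : n → 𝕜) :
    (star v₁ ⬝ᵥ A *ᵥ v₁)⁻¹ * (star w ⬝ᵥ A *ᵥ v₁ * (star v₁ ⬝ᵥ A *ᵥ w))
      + (star v₂ ⬝ᵥ A *ᵥ v₂)⁻¹ * (star w ⬝ᵥ A *ᵥ v₂ * (star v₂ ⬝ᵥ A *ᵥ w))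
      ≤ star w ⬝ᵥ A *ᵥ w := by
  set n₁ := star v₁ ⬝ᵥ A *ᵥ v₁
  set n₂ := star v₂ ⬝ᵥ A *ᵥ v₂
  have hn₁ : star n₁ = n₁ := hA.isHermitian.star_dotProduct_mulVec v₁ v₁
  have hn₂ : star n₂ = n₂ := hA.isHermitian.star_dotProduct_mulVec v₂ v₂
  have h' : star v₂ ⬝ᵥ A *ᵥ v₁ = 0 := by
    rw [← hA.isHermitian.star_dotProduct_mulVec, h, star_zero]
  have hu := hA.dotProduct_mulVec_nonneg
    (w - (n₁⁻¹ * (star v₁ ⬝ᵥ A *ᵥ w)) • v₁ - (n₂⁻¹ * (star v₂ ⬝ᵥ A *ᵥ w)) • v₂)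
  simp only [star_sub, star_smul, mulVec_sub, mulVec_smul, sub_dotProduct, dotProduct_sub,
    smul_dotProduct, dotProduct_smul, smul_eq_mul, star_mul', star_inv₀, hn₁, hn₂, h, h',
    hA.isHermitian.star_dotProduct_mulVec] at hu
  rw [← sub_nonneg]
  convert hu using 1
  -- `n / (n * n) = n⁻¹` holds also for `n = 0`, so no nondegeneracy of `v₁, v₂` is needed.
  linear_combination -(star w ⬝ᵥ A *ᵥ v₁ * (star v₁ ⬝ᵥ A *ᵥ w)) * div_self_mul_self' n₁
    - (star w ⬝ᵥ A *ᵥ v₂ * (star v₂ ⬝ᵥ A *ᵥ w)) * div_self_mul_self' n₂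

end Matrix

theorem stmt_8_general (d : ℕ) (ρ : Matrix (Fin d) (Fin d) ℂ) (hρ : ρ.PosDef)
    (ψ1 ψ2 : Fin d → ℂ)
    (horth : star ψ1 ⬝ᵥ ρ⁻¹ *ᵥ ψ2 = 0) :
    (ρ - (((star ψ1 ⬝ᵥ ρ⁻¹ *ᵥ ψ1).re)⁻¹ : ℂ) • Matrix.vecMulVec ψ1 (star ψ1)
       - (((star ψ2 ⬝ᵥ ρ⁻¹ *ᵥ ψ2).re)⁻¹ : ℂ) • Matrix.vecMulVec ψ2 (star ψ2)).PosSemidef := by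
  have hA : ρ⁻¹.PosSemidef := hρ.posSemidef.inv
  have hself (ψ : Fin d → ℂ) : star (star ψ ⬝ᵥ ρ⁻¹ *ᵥ ψ) = star ψ ⬝ᵥ ρ⁻¹ *ᵥ ψ :=
    hA.isHermitian.star_dotProduct_mulVec ψ ψ
  simp only [Complex.conj_eq_iff_re.mp (hself _)]
  refine .of_dotProduct_mulVec_nonneg ?_ fun x => ?_
  · have hP (ψ : Fin d → ℂ) : ((star ψ ⬝ᵥ ρ⁻¹ *ᵥ ψ)⁻¹ • vecMulVec ψ (star ψ)).IsHermitian :=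
      (posSemidef_vecMulVec_self_star ψ).isHermitian.smul (IsSelfAdjoint.inv₀ (hself ψ))
    exact (hρ.isHermitian.sub (hP ψ1)).sub (hP ψ2)
  · have hρ_unit : IsUnit ρ.det := (isUnit_iff_isUnit_det ρ).mp hρ.isUnit
    obtain ⟨w, rfl⟩ : ∃ w, ρ⁻¹ *ᵥ w = x :=
      ⟨ρ *ᵥ x, by rw [mulVec_mulVec, nonsing_inv_mul ρ hρ_unit, one_mulVec]⟩
    have hρ_form : star (ρ⁻¹ *ᵥ w) ⬝ᵥ ρ *ᵥ ρ⁻¹ *ᵥ w = star w ⬝ᵥ ρ⁻¹ *ᵥ w := by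
      rw [mulVec_mulVec, mul_nonsing_inv ρ hρ_unit, one_mulVec,
        hA.isHermitian.star_mulVec_dotProduct]
    rw [sub_mulVec, sub_mulVec, dotProduct_sub, dotProduct_sub, hρ_form]
    simp only [smul_mulVec, dotProduct_smul, smul_eq_mul, dotProduct_vecMulVec_mulVec]
    simp only [hA.isHermitian.star_mulVec_dotProduct]
    rw [sub_sub, sub_nonneg]
    exact hA.bessel_of_orthogonal horth w

theorem stmt_8 (d : ℕ) (ρ : Matrix (Fin d) (Fin d) ℂ) (hρ : ρ.PosDef)
    (ψ1 ψ2 : Fin d → ℂ) (hψ1 : star ψ1 ⬝ᵥ ψ1 = 1) (hψ2 : star ψ2 ⬝ᵥ ψ2 = 1)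
    (horth : star ψ1 ⬝ᵥ ρ⁻¹ *ᵥ ψ2 = 0) :
    (ρ - (((star ψ1 ⬝ᵥ ρ⁻¹ *ᵥ ψ1).re)⁻¹ : ℂ) • Matrix.vecMulVec ψ1 (star ψ1)
       - (((star ψ2 ⬝ᵥ ρ⁻¹ *ᵥ ψ2).re)⁻¹ : ℂ) • Matrix.vecMulVec ψ2 (star ψ2)).PosSemidef :=
  stmt_8_general d ρ hρ ψ1 ψ2 horth
end

section
/- Let ρ be a positive definite d×d Hermitian matrix, |ψ₁⟩, |ψ₂⟩ unit vectors with a := ⟨ψ₁|ρ⁻¹|ψ₁⟩, b := ⟨ψ₂|ρ⁻¹|ψ₂⟩, c := |⟨ψ₁|ρ⁻¹|ψ₂⟩|, and suppose a, b ≥ c > 0. Let D = ab - c² and Λ₁ = (b - c)/D, Λ₂ = (a - c)/D. Then ρ - Λ₁|ψ₁⟩⟨ψ₁| - Λ₂|ψ₂⟩⟨ψ₂| is positive semidefinite. -/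
/-!
Write `⟨u, v⟩ = u* ρ⁻¹ v`. The Gram matrix of `ρx, ψ₁, ψ₂` for this form is positive
semidefinite, and its determinant expands to
`x*ρx · D - b |ψ₁*x|² - a |ψ₂*x|² + 2 Re(⋯)` with `|Re(⋯)| ≤ c |ψ₁*x| |ψ₂*x|`.
Since `2 |ψ₁*x| |ψ₂*x| ≤ |ψ₁*x|² + |ψ₂*x|²`, this gives
`(b - c) |ψ₁*x|² + (a - c) |ψ₂*x|² ≤ D · x*ρx`, which is the claim after dividing by `D`.
-/

open Matrix ComplexOrder

variable {m n : Type*} [Fintype n]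

lemma Matrix.PosSemidef.gram_dotProduct_mulVec [Finite m] {A : Matrix n n ℂ}
    (hA : A.PosSemidef) (v : m → n → ℂ) :
    (of fun i j => star (v i) ⬝ᵥ A *ᵥ v j).PosSemidef := by
  convert hA.conjTranspose_mul_mul_same (of v)ᵀ using 1
  ext i j
  simp only [of_apply, mul_apply, dotProduct, mulVec, conjTranspose_apply, transpose_apply,
    Pi.star_apply, Finset.mul_sum, Finset.sum_mul, mul_assoc]
  exact Finset.sum_comm

lemma Matrix.PosSemidef.fin_three_bound {M : Matrix (Fin 3) (Fin 3) ℂ} (hM : M.PosSemidef) :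
    (M 2 2).re * ‖M 1 0‖ ^ 2 + (M 1 1).re * ‖M 2 0‖ ^ 2 - 2 * ‖M 1 2‖ * ‖M 1 0‖ * ‖M 2 0‖
      ≤ (M 0 0).re * ((M 1 1).re * (M 2 2).re - ‖M 1 2‖ ^ 2) := by
  have hdiag (i : Fin 3) : M i i = (M i i).re := (Complex.conj_eq_iff_re.1 (hM.1.apply i i)).symm
  have hconj (i j : Fin 3) : M i j = starRingEnd ℂ (M j i) := (hM.1.apply i j).symm
  have hdet : M.det = ((M 0 0).re * ((M 1 1).re * (M 2 2).re - ‖M 1 2‖ ^ 2)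
      - (M 2 2).re * ‖M 1 0‖ ^ 2 - (M 1 1).re * ‖M 2 0‖ ^ 2
      + 2 * (starRingEnd ℂ (M 1 0) * M 1 2 * M 2 0).re : ℝ) := by
    rw [det_fin_three, Complex.ofReal_add, ← Complex.add_conj]
    conv_lhs => rw [hconj 0 1, hconj 0 2, hconj 2 1, hdiag 0, hdiag 1, hdiag 2]
    simp only [map_mul, Complex.conj_conj]
    push_cast
    linear_combination -(M 0 0).re * Complex.mul_conj' (M 1 2)
      - (M 2 2).re * Complex.conj_mul' (M 1 0) - (M 1 1).re * Complex.conj_mul' (M 2 0)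
  have hcross : (starRingEnd ℂ (M 1 0) * M 1 2 * M 2 0).re ≤ ‖M 1 2‖ * ‖M 1 0‖ * ‖M 2 0‖ := by
    refine (Complex.re_le_norm _).trans_eq ?_
    simp only [norm_mul, Complex.norm_conj]
    ring
  have hdet_nonneg := hM.det_nonneg
  rw [hdet, Complex.zero_le_real] at hdet_nonneg
  linarith

lemma Matrix.PosDef.gram_inv_bound [DecidableEq n] {ρ : Matrix n n ℂ} (hρ : ρ.PosDef)
    (ψ₁ ψ₂ x : n → ℂ) :
    (star ψ₂ ⬝ᵥ ρ⁻¹ *ᵥ ψ₂).re * ‖star ψ₁ ⬝ᵥ x‖ ^ 2 + (star ψ₁ ⬝ᵥ ρ⁻¹ *ᵥ ψ₁).re * ‖star ψ₂ ⬝ᵥ x‖ ^ 2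
        - 2 * ‖star ψ₁ ⬝ᵥ ρ⁻¹ *ᵥ ψ₂‖ * ‖star ψ₁ ⬝ᵥ x‖ * ‖star ψ₂ ⬝ᵥ x‖
      ≤ (star x ⬝ᵥ ρ *ᵥ x).re * ((star ψ₁ ⬝ᵥ ρ⁻¹ *ᵥ ψ₁).re * (star ψ₂ ⬝ᵥ ρ⁻¹ *ᵥ ψ₂).re
        - ‖star ψ₁ ⬝ᵥ ρ⁻¹ *ᵥ ψ₂‖ ^ 2) := by
  have hinv : ρ⁻¹ *ᵥ ρ *ᵥ x = x := by
    rw [mulVec_mulVec, nonsing_inv_mul _ ((isUnit_iff_isUnit_det ρ).1 hρ.isUnit), one_mulVec]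
  have hstar : star (ρ *ᵥ x) ⬝ᵥ x = star x ⬝ᵥ ρ *ᵥ x := by
    rw [star_mulVec, hρ.isHermitian.eq, dotProduct_mulVec]
  simpa [hinv, hstar] using
    (hρ.inv.posSemidef.gram_dotProduct_mulVec ![ρ *ᵥ x, ψ₁, ψ₂]).fin_three_bound

lemma dotProduct_vecMulVec_self_star_mulVec (ψ x : n → ℂ) :
    star x ⬝ᵥ vecMulVec ψ (star ψ) *ᵥ x = (‖star ψ ⬝ᵥ x‖ : ℂ) ^ 2 := by
  rw [vecMulVec_mulVec, dotProduct_smul, op_smul_eq_mul, star_dotProduct x ψ]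
  exact Complex.conj_mul' _

theorem stmt_9_general (d : ℕ) (ρ : Matrix (Fin d) (Fin d) ℂ) (hρ : ρ.PosDef)
    (ψ1 ψ2 : Fin d → ℂ)
    (a b c D : ℝ)
    (ha : a = (star ψ1 ⬝ᵥ ρ⁻¹ *ᵥ ψ1).re)
    (hb : b = (star ψ2 ⬝ᵥ ρ⁻¹ *ᵥ ψ2).re)
    (hc : c = ‖star ψ1 ⬝ᵥ ρ⁻¹ *ᵥ ψ2‖)
    (hD : D = a * b - c ^ 2) (hD0 : 0 < D) :
    (ρ - (((b - c) / D : ℝ) : ℂ) • Matrix.vecMulVec ψ1 (star ψ1)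
       - (((a - c) / D : ℝ) : ℂ) • Matrix.vecMulVec ψ2 (star ψ2)).PosSemidef := by
  have hproj (t : ℝ) (ψ : Fin d → ℂ) : ((t : ℂ) • vecMulVec ψ (star ψ)).IsHermitian :=
    (posSemidef_vecMulVec_self_star ψ).1.smul (Complex.conj_ofReal t)
  refine .of_dotProduct_mulVec_nonneg ((hρ.isHermitian.sub (hproj _ _)).sub (hproj _ _)) fun x ↦ ?_
  have hbound := hρ.gram_inv_bound ψ1 ψ2 x
  rw [← ha, ← hb, ← hc, ← hD] at hbound
  have hs : star x ⬝ᵥ ρ *ᵥ x = ((star x ⬝ᵥ ρ *ᵥ x).re : ℂ) :=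
    (Complex.conj_eq_iff_re.1 (hρ.posSemidef.dotProduct_mulVec_nonneg x).star_eq).symm
  rw [sub_mulVec, sub_mulVec, dotProduct_sub, dotProduct_sub, smul_mulVec, smul_mulVec,
    dotProduct_smul, dotProduct_smul, dotProduct_vecMulVec_self_star_mulVec,
    dotProduct_vecMulVec_self_star_mulVec, hs]
  simp only [smul_eq_mul]
  set s := (star x ⬝ᵥ ρ *ᵥ x).re
  set p := ‖star ψ1 ⬝ᵥ x‖
  set q := ‖star ψ2 ⬝ᵥ x‖
  have hweighted : (b - c) * p ^ 2 + (a - c) * q ^ 2 ≤ s * D := by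
    nlinarith [mul_nonneg (hc ▸ norm_nonneg _ : 0 ≤ c) (sq_nonneg (p - q))]
  have hdiv : (b - c) / D * p ^ 2 + (a - c) / D * q ^ 2 ≤ s := by
    rw [div_mul_eq_mul_div, div_mul_eq_mul_div, ← add_div, div_le_iff₀ hD0]
    exact hweighted
  exact_mod_cast sub_nonneg.2 (by linarith)

theorem stmt_9 (d : ℕ) (ρ : Matrix (Fin d) (Fin d) ℂ) (hρ : ρ.PosDef)
    (ψ1 ψ2 : Fin d → ℂ) (hψ1 : star ψ1 ⬝ᵥ ψ1 = 1) (hψ2 : star ψ2 ⬝ᵥ ψ2 = 1)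
    (a b c D : ℝ)
    (ha : a = (star ψ1 ⬝ᵥ ρ⁻¹ *ᵥ ψ1).re)
    (hb : b = (star ψ2 ⬝ᵥ ρ⁻¹ *ᵥ ψ2).re)
    (hc : c = ‖star ψ1 ⬝ᵥ ρ⁻¹ *ᵥ ψ2‖)
    (hc0 : 0 < c) (hac : c ≤ a) (hbc : c ≤ b)
    (hD : D = a * b - c ^ 2) (hD0 : 0 < D) :
    (ρ - (((b - c) / D : ℝ) : ℂ) • Matrix.vecMulVec ψ1 (star ψ1)
       - (((a - c) / D : ℝ) : ℂ) • Matrix.vecMulVec ψ2 (star ψ2)).PosSemidef :=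
  stmt_9_general d ρ hρ ψ1 ψ2 a b c D ha hb hc hD hD0
end

section
/- Let ρ be a d×d density matrix (d ≥ 2) that is singular, and suppose some eigenvector |ψ⟩ of ρ with eigenvalue 0 has all coordinates nonzero in the standard basis (full coherence rank). Then for every i ∈ {0,…,d-1} and every λ > 0, the matrix ρ - λ|i⟩⟨i| is NOT positive semidefinite; consequently the coherence weight C_w(ρ) = 1. -/
/-!
If `ρ ψ = 0` and `ρ - D ⪰ 0` for a nonnegative diagonal `D = diag(λ)`, then
`0 ≤ ⟨ψ, (ρ - D) ψ⟩ = -∑ᵢ λᵢ |ψᵢ|²`, so every `λᵢ |ψᵢ|²` vanishes. When `ψ` has no zero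
coordinate this forces `D = 0`: no incoherent part can be split off `ρ`.
-/

open Matrix ComplexOrder

section

variable {n : Type*} [Fintype n]

theorem star_dotProduct_diagonal_ofReal_mulVec [DecidableEq n] (lam : n → ℝ) (ψ : n → ℂ) :
    star ψ ⬝ᵥ diagonal (fun i => (lam i : ℂ)) *ᵥ ψ =
      ((∑ i, lam i * Complex.normSq (ψ i) : ℝ) : ℂ) := by
  simp only [mulVec_diagonal, dotProduct, Pi.star_apply, Complex.ofReal_sum,
    Complex.ofReal_mul, Complex.normSq_eq_conj_mul_self]
  exact Finset.sum_congr rfl fun i _ => by simp only [RCLike.star_def]; ring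

theorem star_dotProduct_mulVec_nonpos_of_posSemidef_sub {ρ B : Matrix n n ℂ} {ψ : n → ℂ}
    (h : (ρ - B).PosSemidef) (hker : ρ *ᵥ ψ = 0) : star ψ ⬝ᵥ B *ᵥ ψ ≤ 0 := by
  have := h.dotProduct_mulVec_nonneg ψ
  rwa [sub_mulVec, dotProduct_sub, hker, dotProduct_zero, zero_sub, neg_nonneg] at this

theorem eq_zero_of_posSemidef_sub_diagonal [DecidableEq n] {ρ : Matrix n n ℂ} {lam : n → ℝ}
    {ψ : n → ℂ} (hlam : 0 ≤ lam) (hker : ρ *ᵥ ψ = 0) (hψ : ∀ i, ψ i ≠ 0)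
    (h : (ρ - diagonal (fun i => (lam i : ℂ))).PosSemidef) : lam = 0 := by
  have hterm : ∀ i ∈ Finset.univ, 0 ≤ lam i * Complex.normSq (ψ i) :=
    fun i _ => mul_nonneg (hlam i) (Complex.normSq_nonneg _)
  have hsum : ∑ i, lam i * Complex.normSq (ψ i) ≤ 0 := by
    have := star_dotProduct_mulVec_nonpos_of_posSemidef_sub h hker
    rwa [star_dotProduct_diagonal_ofReal_mulVec, ← Complex.ofReal_zero, Complex.real_le_real] at this
  have hzero := (Finset.sum_eq_zero_iff_of_nonneg hterm).1
    (le_antisymm hsum (Finset.sum_nonneg hterm))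
  funext i
  exact (mul_eq_zero.1 (hzero i (Finset.mem_univ i))).resolve_right
    (Complex.normSq_pos.2 (hψ i)).ne'

theorem coherenceWeight_eq_one_of_mulVec_eq_zero [DecidableEq n] {ρ : Matrix n n ℂ}
    {ψ : n → ℂ} (hpsd : ρ.PosSemidef) (hker : ρ *ᵥ ψ = 0) (hψ : ∀ i, ψ i ≠ 0) :
    coherenceWeight ρ = 1 := by
  have hS : {s : ℝ | ∃ lam : n → ℝ, (∀ i, 0 ≤ lam i) ∧ s = ∑ i, lam i ∧
      (ρ - diagonal (fun i => (lam i : ℂ))).PosSemidef} = {0} := by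
    ext s
    constructor
    · rintro ⟨lam, hlam, rfl, h⟩
      simp [eq_zero_of_posSemidef_sub_diagonal hlam hker hψ h]
    · rintro rfl
      exact ⟨0, fun _ => le_rfl, by simp, by simpa using hpsd⟩
  rw [coherenceWeight, hS, csSup_singleton, sub_zero]

end

theorem stmt_10_general (d : ℕ) (ρ : Matrix (Fin d) (Fin d) ℂ)
    (hpsd : ρ.PosSemidef)
    (ψ : Fin d → ℂ) (hψker : ρ *ᵥ ψ = 0) (hψ : ∀ i, ψ i ≠ 0) :
    (∀ i : Fin d, ∀ lam : ℝ, 0 < lam →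
        ¬ (ρ - (lam : ℂ) • Matrix.single i i (1 : ℂ)).PosSemidef) ∧
    coherenceWeight ρ = 1 := by
  refine ⟨fun i lam hlam h => ?_, coherenceWeight_eq_one_of_mulVec_eq_zero hpsd hψker hψ⟩
  have hsingle : (lam : ℂ) • single i i (1 : ℂ) =
      diagonal (fun j => ((Pi.single i lam : Fin d → ℝ) j : ℂ)) := by
    rw [smul_single, smul_eq_mul, mul_one, ← diagonal_single]
    congr 1
    funext j
    by_cases hj : j = i <;> simp [hj]
  rw [hsingle] at h
  have hzero := eq_zero_of_posSemidef_sub_diagonal (Pi.single_nonneg.2 hlam.le) hψker hψ h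
  simpa [hlam.ne'] using congr_fun hzero i

theorem stmt_10 (d : ℕ) (hd : 2 ≤ d) (ρ : Matrix (Fin d) (Fin d) ℂ)
    (hpsd : ρ.PosSemidef) (htr : ρ.trace = 1)
    (ψ : Fin d → ℂ) (hψker : ρ *ᵥ ψ = 0) (hψ : ∀ i, ψ i ≠ 0) :
    (∀ i : Fin d, ∀ lam : ℝ, 0 < lam →
        ¬ (ρ - (lam : ℂ) • Matrix.single i i (1 : ℂ)).PosSemidef) ∧
    coherenceWeight ρ = 1 :=
  stmt_10_general d ρ hpsd ψ hψker hψ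
end

section
/- Let ρ = ⊕ⱼ pⱼ ρⱼ be a block-diagonal density matrix where each block ρⱼ is a density matrix supported on a subset of the standard basis partitioning {0,…,d-1}, pⱼ ≥ 0, Σⱼ pⱼ = 1. Then the coherence weight is additive over blocks: C_w(ρ) = Σⱼ pⱼ C_w(ρⱼ). -/
open Matrix ComplexOrder

/-! Write `C_w(ρ) = 1 - sup W(ρ)`, where `W(ρ)` is the set of total weights `∑ λᵢ` of the
diagonal matrices that can be subtracted from `ρ` leaving it positive semidefinite. A
block-diagonal matrix is positive semidefinite iff each block is, so `W(⊕ⱼ Mⱼ)` is the Minkowski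
sum of the `W(Mⱼ)` and suprema add up; moreover `W(c • ρ) = c • W(ρ)` for `c > 0`, while
`W(0) = {0}`. Hence `sup W(⊕ⱼ pⱼ ρⱼ) = ∑ⱼ pⱼ sup W(ρⱼ)`, and `∑ⱼ pⱼ = 1` turns this into the
additivity of `C_w`. -/

open scoped Pointwise

theorem isLUB_finsetSum {ι G : Type*} [AddCommGroup G] [Preorder G] [AddLeftMono G]
    (t : Finset ι) {S : ι → Set G} {a : ι → G}
    (h : ∀ i ∈ t, IsLUB (S i) (a i)) : IsLUB (∑ i ∈ t, S i) (∑ i ∈ t, a i) := by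
  classical
  induction t using Finset.induction_on with
  | empty => simpa only [Finset.sum_empty, ← Set.singleton_zero] using isLUB_singleton
  | insert i t hi ih =>
    rw [Finset.sum_insert hi, Finset.sum_insert hi]
    exact (h i (t.mem_insert_self i)).add (ih fun j hj => h j (Finset.mem_insert_of_mem hj))

section BlockDiagonal

variable {ι : Type*} [DecidableEq ι] {κ : ι → Type*}

theorem blockDiagonal'_sub_diagonal {α : Type*} [AddGroup α] [∀ i, DecidableEq (κ i)]
    (M : ∀ i, Matrix (κ i) (κ i) α) (d : ∀ i, κ i → α) :
    blockDiagonal' M - diagonal (fun ik => d ik.1 ik.2) =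
      blockDiagonal' fun i => M i - diagonal (d i) := by
  rw [← blockDiagonal'_diagonal, ← blockDiagonal'_sub]
  rfl

variable [Fintype ι] [∀ i, Fintype (κ i)]

theorem dotProduct_blockDiagonal'_mulVec {α : Type*} [NonUnitalNonAssocSemiring α] [Star α]
    (M : ∀ i, Matrix (κ i) (κ i) α) (x : (Σ i, κ i) → α) :
    star x ⬝ᵥ (blockDiagonal' M *ᵥ x) =
      ∑ i, star (fun k => x ⟨i, k⟩) ⬝ᵥ (M i *ᵥ fun k => x ⟨i, k⟩) := by
  simp only [dotProduct, mulVec, Fintype.sum_sigma, Finset.mul_sum]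
  refine Finset.sum_congr rfl fun i _ => Finset.sum_congr rfl fun k _ => ?_
  rw [Finset.sum_eq_single i]
  · simp [blockDiagonal'_apply_eq]
  · intro j _ hj
    simp [blockDiagonal'_apply_ne M _ _ (Ne.symm hj)]
  · simp

theorem posSemidef_blockDiagonal'_iff {R : Type*} [Ring R] [PartialOrder R] [StarRing R]
    [AddLeftMono R] (M : ∀ i, Matrix (κ i) (κ i) R) :
    (blockDiagonal' M).PosSemidef ↔ ∀ i, (M i).PosSemidef := by
  refine ⟨fun h i => ?_, fun h => ?_⟩
  · convert h.submatrix (Sigma.mk i)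
    ext a b
    simp [blockDiagonal'_apply_eq]
  · refine .of_dotProduct_mulVec_nonneg (isHermitian_blockDiagonal'_iff.mpr fun i => (h i).1)
      fun x => ?_
    rw [dotProduct_blockDiagonal'_mulVec]
    exact Finset.sum_nonneg fun i _ => (h i).dotProduct_mulVec_nonneg _

end BlockDiagonal

theorem smul_sub_diagonal_ofReal {n : Type*} [DecidableEq n] (c : ℝ) (ρ : Matrix n n ℂ)
    (lam : n → ℝ) :
    (c : ℂ) • (ρ - diagonal fun i => (lam i : ℂ)) =
      (c : ℂ) • ρ - diagonal fun i => ((c * lam i : ℝ) : ℂ) := by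
  rw [smul_sub, ← diagonal_smul]
  congr
  ext i
  simp

def incoherentWeights {n : Type*} [Fintype n] [DecidableEq n] (ρ : Matrix n n ℂ) : Set ℝ :=
  {s : ℝ | ∃ lam : n → ℝ, (∀ i, 0 ≤ lam i) ∧ s = ∑ i, lam i ∧
      (ρ - diagonal fun i => (lam i : ℂ)).PosSemidef}

section IncoherentWeights

variable {n : Type*} [Fintype n] [DecidableEq n]

theorem coherenceWeight_eq_one_sub_sSup (ρ : Matrix n n ℂ) :
    coherenceWeight ρ = 1 - sSup (incoherentWeights ρ) := rfl

theorem zero_mem_incoherentWeights {ρ : Matrix n n ℂ} (hρ : ρ.PosSemidef) :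
    0 ∈ incoherentWeights ρ :=
  ⟨0, fun _ => le_rfl, by simp, by simpa using hρ⟩

theorem bddAbove_incoherentWeights (ρ : Matrix n n ℂ) : BddAbove (incoherentWeights ρ) := by
  refine ⟨∑ i, (ρ i i).re, ?_⟩
  rintro _ ⟨lam, -, rfl, hpsd⟩
  refine Finset.sum_le_sum fun i _ => ?_
  have hdiag : 0 ≤ ρ i i - lam i := by
    simpa using hpsd.diag_nonneg (i := i)
  simpa using (Complex.nonneg_iff.mp hdiag).1

theorem incoherentWeights_zero : incoherentWeights (0 : Matrix n n ℂ) = {0} := by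
  ext s
  constructor
  · rintro ⟨lam, hlam, rfl, hpsd⟩
    rw [zero_sub, diagonal_neg, posSemidef_diagonal_iff] at hpsd
    have hzero : ∀ i, lam i = 0 := fun i =>
      le_antisymm (by exact_mod_cast (by simpa using hpsd i : (lam i : ℂ) ≤ 0)) (hlam i)
    simp [hzero]
  · rintro rfl
    exact zero_mem_incoherentWeights .zero

theorem smul_incoherentWeights_subset {c : ℝ} (hc : 0 ≤ c) (ρ : Matrix n n ℂ) :
    c • incoherentWeights ρ ⊆ incoherentWeights ((c : ℂ) • ρ) := by
  rintro _ ⟨_, ⟨lam, hlam, rfl, hpsd⟩, rfl⟩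
  refine ⟨fun i => c * lam i, fun i => mul_nonneg hc (hlam i), by simp [Finset.mul_sum], ?_⟩
  rw [← smul_sub_diagonal_ofReal]
  exact hpsd.smul (Complex.zero_le_real.mpr hc)

theorem incoherentWeights_smul {c : ℝ} (hc : 0 < c) (ρ : Matrix n n ℂ) :
    incoherentWeights ((c : ℂ) • ρ) = c • incoherentWeights ρ := by
  refine subset_antisymm ?_ (smul_incoherentWeights_subset hc.le ρ)
  calc incoherentWeights ((c : ℂ) • ρ)
      = c • c⁻¹ • incoherentWeights ((c : ℂ) • ρ) := by rw [smul_inv_smul₀ hc.ne']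
    _ ⊆ c • incoherentWeights (((c⁻¹ : ℝ) : ℂ) • (c : ℂ) • ρ) :=
        Set.smul_set_mono (smul_incoherentWeights_subset (inv_nonneg.mpr hc.le) _)
    _ = c • incoherentWeights ρ := by
        rw [smul_smul, ← Complex.ofReal_mul, inv_mul_cancel₀ hc.ne', Complex.ofReal_one, one_smul]

theorem sSup_incoherentWeights_smul {c : ℝ} (hc : 0 ≤ c) (ρ : Matrix n n ℂ) :
    sSup (incoherentWeights ((c : ℂ) • ρ)) = c * sSup (incoherentWeights ρ) := by
  rcases hc.eq_or_lt with rfl | hc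
  · simp [incoherentWeights_zero]
  · rw [incoherentWeights_smul hc, Real.sSup_smul_of_nonneg hc.le, smul_eq_mul]

end IncoherentWeights

theorem incoherentWeights_blockDiagonal' {ι : Type*} [Fintype ι] [DecidableEq ι] {κ : ι → Type*}
    [∀ i, Fintype (κ i)] [∀ i, DecidableEq (κ i)] (M : ∀ i, Matrix (κ i) (κ i) ℂ) :
    incoherentWeights (blockDiagonal' M) = ∑ i, incoherentWeights (M i) := by
  ext s
  rw [Set.mem_fintype_sum]
  constructor
  · rintro ⟨lam, hlam, rfl, hpsd⟩
    rw [blockDiagonal'_sub_diagonal M fun i k => (lam ⟨i, k⟩ : ℂ),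
      posSemidef_blockDiagonal'_iff] at hpsd
    exact ⟨fun i => ∑ k, lam ⟨i, k⟩, fun i => ⟨_, fun k => hlam _, rfl, hpsd i⟩,
      (Fintype.sum_sigma _).symm⟩
  · rintro ⟨t, ht, rfl⟩
    choose lam hlam hsum hpsd using ht
    refine ⟨fun ik => lam ik.1 ik.2, fun ik => hlam _ _, by simp [Fintype.sum_sigma, hsum], ?_⟩
    rw [blockDiagonal'_sub_diagonal M fun i k => (lam i k : ℂ), posSemidef_blockDiagonal'_iff]
    exact hpsd

theorem stmt_13_general (N : ℕ) (m : Fin N → ℕ)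
    (ρ : ∀ j, Matrix (Fin (m j)) (Fin (m j)) ℂ)
    (hρpsd : ∀ j, (ρ j).PosSemidef)
    (p : Fin N → ℝ) (hp : ∀ j, 0 ≤ p j) (hp1 : ∑ j, p j = 1) :
    coherenceWeight (Matrix.blockDiagonal' (fun j => (p j : ℂ) • ρ j)) =
      ∑ j, p j * coherenceWeight (ρ j) := by
  have hpsd : ∀ j, ((p j : ℂ) • ρ j).PosSemidef := fun j =>
    (hρpsd j).smul (Complex.zero_le_real.mpr (hp j))
  have hblock : ∀ j, IsLUB (incoherentWeights ((p j : ℂ) • ρ j))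
      (p j * sSup (incoherentWeights (ρ j))) := fun j => by
    rw [← sSup_incoherentWeights_smul (hp j)]
    exact isLUB_csSup ⟨0, zero_mem_incoherentWeights (hpsd j)⟩ (bddAbove_incoherentWeights _)
  have hsum := isLUB_finsetSum Finset.univ fun j _ => hblock j
  rw [← incoherentWeights_blockDiagonal'] at hsum
  rw [coherenceWeight_eq_one_sub_sSup,
    hsum.csSup_eq ⟨0, zero_mem_incoherentWeights ((posSemidef_blockDiagonal'_iff _).mpr hpsd)⟩]
  simp only [coherenceWeight_eq_one_sub_sSup, mul_sub, mul_one, Finset.sum_sub_distrib, hp1]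

theorem stmt_13 (N : ℕ) (m : Fin N → ℕ)
    (ρ : ∀ j, Matrix (Fin (m j)) (Fin (m j)) ℂ)
    (hρpsd : ∀ j, (ρ j).PosSemidef) (hρtr : ∀ j, (ρ j).trace = 1)
    (p : Fin N → ℝ) (hp : ∀ j, 0 ≤ p j) (hp1 : ∑ j, p j = 1) :
    coherenceWeight (Matrix.blockDiagonal' (fun j => (p j : ℂ) • ρ j)) =
      ∑ j, p j * coherenceWeight (ρ j) :=
  stmt_13_general N m ρ hρpsd p hp hp1
end

section
/- Let ρ = Σⱼ pⱼ|φⱼ⟩⟨φⱼ| be a density matrix where the pure states |φⱼ⟩ are supported on pairwise disjoint subsets of the standard basis, each |φⱼ⟩ has at least two nonzero coordinates (coherence rank ≥ 2), pⱼ > 0, Σⱼ pⱼ = 1. Then C_w(ρ) = 1. -/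
open Matrix ComplexOrder

/-!
A diagonal weight `λ` can be subtracted from `ρ ⪰ 0` only where no kernel vector of `ρ` lives:
if `ρ x = 0` then `0 ≤ x* (ρ - diag λ) x = -x* diag λ x ≤ 0`, so `diag λ · x = 0`, i.e.
`λᵢ = 0` wherever `xᵢ ≠ 0`. For `ρ = ∑ⱼ pⱼ |φⱼ⟩⟨φⱼ|` with disjointly supported `φⱼ`, every basis
index `i` in the support of some `φⱼ` carries a kernel vector: on the two coordinates `i, i'` of a
second nonzero entry of `φⱼ` take `x = (conj φⱼ(i'), -conj φⱼ(i))`, which is orthogonal to `φⱼ`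
and, by disjointness, to every other `φₖ`; an index outside all supports gives the kernel
vector `eᵢ`. Hence only `λ = 0` is admissible and `C_w(ρ) = 1`.
-/

namespace Matrix

variable {n ι : Type*} [Fintype n]

section

variable [Fintype ι]

theorem posSemidef_sum_smul_vecMulVec_star {p : ι → ℝ} (hp : ∀ j, 0 ≤ p j)
    (φ : ι → n → ℂ) :
    (∑ j, (p j : ℂ) • vecMulVec (φ j) (star (φ j))).PosSemidef :=
  posSemidef_sum _ fun j _ =>
    (posSemidef_vecMulVec_self_star (φ j)).smul (Complex.zero_le_real.mpr (hp j))

theorem sum_smul_vecMulVec_star_mulVec_eq_zero (p : ι → ℝ) {φ : ι → n → ℂ} {x : n → ℂ}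
    (hx : ∀ j, star (φ j) ⬝ᵥ x = 0) :
    (∑ j, (p j : ℂ) • vecMulVec (φ j) (star (φ j))) *ᵥ x = 0 := by
  simp [sum_mulVec, smul_mulVec, vecMulVec_mulVec, hx]

end

variable [DecidableEq n]

theorem eq_zero_of_posSemidef_sub_diagonal {A : Matrix n n ℂ} {lam : n → ℝ}
    (hlam : ∀ i, 0 ≤ lam i) (h : (A - diagonal (fun i => (lam i : ℂ))).PosSemidef)
    {x : n → ℂ} (hx : A *ᵥ x = 0) {i : n} (hxi : x i ≠ 0) : lam i = 0 := by
  set D := diagonal (fun i => (lam i : ℂ))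
  have hD : D.PosSemidef := PosSemidef.diagonal fun i => Complex.zero_le_real.mpr (hlam i)
  have hquad : star x ⬝ᵥ D *ᵥ x = 0 := by
    have := h.dotProduct_mulVec_nonneg x
    rw [sub_mulVec, hx, zero_sub, dotProduct_neg, neg_nonneg] at this
    exact le_antisymm this (hD.dotProduct_mulVec_nonneg x)
  have hDx := congrFun ((hD.dotProduct_mulVec_zero_iff x).mp hquad) i
  rw [mulVec_diagonal, Pi.zero_apply, mul_eq_zero] at hDx
  exact_mod_cast hDx.resolve_right hxi

end Matrix

theorem coherenceWeight_eq_one_of_forall_exists_mulVec_eq_zero {n : Type*} [Fintype n]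
    [DecidableEq n] {A : Matrix n n ℂ} (hA : A.PosSemidef) (hker : ∀ i, ∃ x, A *ᵥ x = 0 ∧ x i ≠ 0) :
    coherenceWeight A = 1 := by
  have hadmissible : {s : ℝ | ∃ lam : n → ℝ, (∀ i, 0 ≤ lam i) ∧ s = ∑ i, lam i ∧
      (A - diagonal (fun i => (lam i : ℂ))).PosSemidef} = {0} := by
    ext s
    constructor
    · rintro ⟨lam, hlam, rfl, h⟩
      refine Finset.sum_eq_zero fun i _ => ?_
      obtain ⟨x, hx, hxi⟩ := hker i
      exact eq_zero_of_posSemidef_sub_diagonal hlam h hx hxi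
    · rintro rfl
      exact ⟨0, fun _ => le_rfl, by simp, by simpa using hA⟩
  rw [coherenceWeight, hadmissible, csSup_singleton, sub_zero]

theorem exists_forall_star_dotProduct_eq_zero {n ι : Type*} [Fintype n] [DecidableEq n]
    {φ : ι → n → ℂ} (hdisj : ∀ j k, j ≠ k → ∀ i, φ j i = 0 ∨ φ k i = 0)
    (hrank : ∀ j, ∃ i i' : n, i ≠ i' ∧ φ j i ≠ 0 ∧ φ j i' ≠ 0) (i : n) :
    ∃ x : n → ℂ, (∀ k, star (φ k) ⬝ᵥ x = 0) ∧ x i ≠ 0 := by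
  by_cases hi : ∃ j, φ j i ≠ 0
  · obtain ⟨j, hji⟩ := hi
    obtain ⟨i', hii', hji'⟩ : ∃ i', i ≠ i' ∧ φ j i' ≠ 0 := by
      obtain ⟨i₁, i₂, h₁₂, h₁, h₂⟩ := hrank j
      by_cases h : i₁ = i
      · exact ⟨i₂, h ▸ h₁₂, h₂⟩
      · exact ⟨i₁, Ne.symm h, h₁⟩
    refine ⟨Pi.single i (star (φ j i')) + Pi.single i' (-star (φ j i)), fun k => ?_, ?_⟩
    · rw [dotProduct_add, dotProduct_single, dotProduct_single]
      obtain rfl | hkj := eq_or_ne k j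
      · simp only [Pi.star_apply]
        ring
      · have hk := (hdisj j k hkj.symm i).resolve_left hji
        have hk' := (hdisj j k hkj.symm i').resolve_left hji'
        simp [hk, hk']
    · simpa [Pi.single_eq_of_ne hii'] using hji'
  · simp only [not_exists, not_not] at hi
    exact ⟨Pi.single i 1, fun k => by simp [hi k], by simp⟩

theorem stmt_14_general (d N : ℕ) (φ : Fin N → Fin d → ℂ)
    (hdisj : ∀ j k, j ≠ k → ∀ i, φ j i = 0 ∨ φ k i = 0)
    (hrank : ∀ j, ∃ i i' : Fin d, i ≠ i' ∧ φ j i ≠ 0 ∧ φ j i' ≠ 0)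
    (p : Fin N → ℝ) (hp : ∀ j, 0 < p j) :
    coherenceWeight (∑ j, (p j : ℂ) • Matrix.vecMulVec (φ j) (star (φ j))) = 1 := by
  refine coherenceWeight_eq_one_of_forall_exists_mulVec_eq_zero
    (posSemidef_sum_smul_vecMulVec_star (fun j => (hp j).le) φ) fun i => ?_
  obtain ⟨x, hx, hxi⟩ := exists_forall_star_dotProduct_eq_zero hdisj hrank i
  exact ⟨x, sum_smul_vecMulVec_star_mulVec_eq_zero p hx, hxi⟩

theorem stmt_14 (d N : ℕ) (φ : Fin N → Fin d → ℂ)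
    (hunit : ∀ j, star (φ j) ⬝ᵥ φ j = 1)
    (hdisj : ∀ j k, j ≠ k → ∀ i, φ j i = 0 ∨ φ k i = 0)
    (hrank : ∀ j, ∃ i i' : Fin d, i ≠ i' ∧ φ j i ≠ 0 ∧ φ j i' ≠ 0)
    (p : Fin N → ℝ) (hp : ∀ j, 0 < p j) (hp1 : ∑ j, p j = 1) :
    coherenceWeight (∑ j, (p j : ℂ) • Matrix.vecMulVec (φ j) (star (φ j))) = 1 :=
  stmt_14_general d N φ hdisj hrank p hp
end

section
/- For a pure state |φ⟩ with at least two nonzero coordinates in the standard basis, the coherence weight is maximal: C_w(|φ⟩⟨φ|) = 1. That is, for any nonnegative λᵢ with Σᵢλᵢ > 0, the matrix |φ⟩⟨φ| - Σᵢλᵢ|i⟩⟨i| is not positive semidefinite. -/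
open Matrix ComplexOrder

section

variable {n : Type*} [Fintype n] [DecidableEq n]

theorem coherenceWeight_eq_one {ρ : Matrix n n ℂ} (hρ : ρ.PosSemidef)
    (h : ∀ lam : n → ℝ, (∀ i, 0 ≤ lam i) → 0 < ∑ i, lam i →
      ¬ (ρ - diagonal (fun i => (lam i : ℂ))).PosSemidef) :
    coherenceWeight ρ = 1 := by
  suffices hset : {s : ℝ | ∃ lam : n → ℝ, (∀ i, 0 ≤ lam i) ∧ s = ∑ i, lam i ∧
      (ρ - diagonal (fun i => (lam i : ℂ))).PosSemidef} = {0} by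
    rw [coherenceWeight, hset, csSup_singleton, sub_zero]
  ext s
  refine ⟨?_, ?_⟩
  · rintro ⟨lam, hlam, rfl, hpsd⟩
    by_contra hne
    exact h lam hlam ((Finset.sum_nonneg fun i _ => hlam i).lt_of_ne' hne) hpsd
  · rintro rfl
    exact ⟨0, fun _ => le_rfl, by simp, by simpa using hρ⟩

theorem dotProduct_diagonal_mulVec_ofReal (lam : n → ℝ) (ψ : n → ℂ) :
    star ψ ⬝ᵥ (diagonal (fun i => (lam i : ℂ)) *ᵥ ψ) =
      ((∑ i, lam i * Complex.normSq (ψ i) : ℝ) : ℂ) := by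
  simp [dotProduct, mulVec_diagonal, Complex.normSq_eq_conj_mul_self, mul_left_comm]

theorem sum_mul_normSq_nonpos_of_posSemidef {φ ψ : n → ℂ} {lam : n → ℝ}
    (hpsd : (vecMulVec φ (star φ) - diagonal (fun i => (lam i : ℂ))).PosSemidef)
    (horth : star φ ⬝ᵥ ψ = 0) :
    ∑ i, lam i * Complex.normSq (ψ i) ≤ 0 := by
  have := hpsd.dotProduct_mulVec_nonneg ψ
  rw [sub_mulVec, dotProduct_sub, vecMulVec_mulVec, horth, MulOpposite.op_zero, zero_smul,
    dotProduct_zero, zero_sub, dotProduct_diagonal_mulVec_ofReal, neg_nonneg] at this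
  exact_mod_cast this

theorem not_posSemidef_vecMulVec_sub_diagonal {φ : n → ℂ}
    (hrank : ∃ i i' : n, i ≠ i' ∧ φ i ≠ 0 ∧ φ i' ≠ 0) {lam : n → ℝ}
    (hlam : ∀ i, 0 ≤ lam i) (hsum : 0 < ∑ i, lam i) :
    ¬ (vecMulVec φ (star φ) - diagonal (fun i => (lam i : ℂ))).PosSemidef := by
  intro hpsd
  obtain ⟨i, -, hi⟩ := Finset.exists_lt_of_sum_lt (by simpa using hsum : ∑ _ : n, (0 : ℝ) < _)
  obtain ⟨j, hji, hj⟩ : ∃ j, j ≠ i ∧ φ j ≠ 0 := by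
    obtain ⟨k, k', hkk', hk, hk'⟩ := hrank
    by_cases hki : k = i
    · exact ⟨k', fun h => hkk' (hki.trans h.symm), hk'⟩
    · exact ⟨k, hki, hk⟩
  set ψ : n → ℂ := Pi.single i (star (φ j)) - Pi.single j (star (φ i))
  have horth : star φ ⬝ᵥ ψ = 0 := by
    simp [ψ, dotProduct_sub, mul_comm]
  have hψi : ψ i = star (φ j) := by simp [ψ, hji.symm]
  have hle := sum_mul_normSq_nonpos_of_posSemidef hpsd horth
  have hlt : 0 < lam i * Complex.normSq (ψ i) := by
    rw [hψi, Complex.star_def, Complex.normSq_conj]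
    exact mul_pos hi (Complex.normSq_pos.2 hj)
  have := Finset.single_le_sum (f := fun k => lam k * Complex.normSq (ψ k))
    (fun k _ => mul_nonneg (hlam k) (Complex.normSq_nonneg _)) (Finset.mem_univ i)
  linarith

end

theorem stmt_15_general (d : ℕ) (φ : Fin d → ℂ)
    (hrank : ∃ i i' : Fin d, i ≠ i' ∧ φ i ≠ 0 ∧ φ i' ≠ 0) :
    coherenceWeight (Matrix.vecMulVec φ (star φ)) = 1 ∧
    ∀ lam : Fin d → ℝ, (∀ i, 0 ≤ lam i) → 0 < ∑ i, lam i →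
      ¬ (Matrix.vecMulVec φ (star φ) -
          Matrix.diagonal (fun i => (lam i : ℂ))).PosSemidef := by
  have key : ∀ lam : Fin d → ℝ, (∀ i, 0 ≤ lam i) → 0 < ∑ i, lam i →
      ¬ (vecMulVec φ (star φ) - diagonal (fun i => (lam i : ℂ))).PosSemidef :=
    fun _ hlam hsum => not_posSemidef_vecMulVec_sub_diagonal hrank hlam hsum
  exact ⟨coherenceWeight_eq_one (posSemidef_vecMulVec_self_star φ) key, key⟩

theorem stmt_15 (d : ℕ) (φ : Fin d → ℂ) (hunit : star φ ⬝ᵥ φ = 1)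
    (hrank : ∃ i i' : Fin d, i ≠ i' ∧ φ i ≠ 0 ∧ φ i' ≠ 0) :
    coherenceWeight (Matrix.vecMulVec φ (star φ)) = 1 ∧
    ∀ lam : Fin d → ℝ, (∀ i, 0 ≤ lam i) → 0 < ∑ i, lam i →
      ¬ (Matrix.vecMulVec φ (star φ) -
          Matrix.diagonal (fun i => (lam i : ℂ))).PosSemidef :=
  stmt_15_general d φ hrank
end

section
/- Let ρ be a qutrit (3×3) density matrix of rank 2 with C_w(ρ) = 1. Then its eigenvector |ψ₀⟩ corresponding to the zero eigenvalue has all three coordinates nonzero in the standard basis (full coherence rank). -/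
/-!
Suppose `ψ₀ i = 0`. Since `ρ` has rank two, `ker ρ = ℂ ψ₀`, so the basis vector `eᵢ` is orthogonal
to `ker ρ` and, `ρ` being Hermitian, lies in its range: `ρ w = eᵢ`. Then `r = ⟨w, ρ w⟩ = conj (w i)`
is positive and, by Cauchy–Schwarz for the form `⟨·, ρ ·⟩`, `|vᵢ|² = |⟨w, ρ v⟩|² ≤ r ⟨v, ρ v⟩`,
i.e. `ρ - r⁻¹ |i⟩⟨i| ⪰ 0`. Hence `C_w(ρ) ≤ 1 - r⁻¹ < 1`.
-/

open Matrix ComplexOrder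

namespace Matrix

variable {n : Type*} [Fintype n]

theorem ker_mulVecLin_eq_span_singleton {K : Type*} [Field K]
    {A : Matrix n n K} (hrank : A.rank + 1 = Fintype.card n) {ψ : n → K} (hψ : A *ᵥ ψ = 0)
    (hψ0 : ψ ≠ 0) : LinearMap.ker A.mulVecLin = K ∙ ψ := by
  refine (Submodule.eq_of_le_of_finrank_le ?_ ?_).symm
  · simpa [Submodule.span_singleton_le_iff_mem] using hψ
  · have hdim := LinearMap.finrank_range_add_finrank_ker A.mulVecLin
    rw [finrank_span_singleton hψ0]
    simp only [Module.finrank_fintype_fun_eq_card] at hdim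
    rw [rank] at hrank
    omega

variable {𝕜 : Type*} [RCLike 𝕜]

theorem PosSemidef.sub_inv_smul_vecMulVec {A : Matrix n n 𝕜} (hA : A.PosSemidef) {w b : n → 𝕜}
    (hw : A *ᵥ w = b) : (A - (star w ⬝ᵥ b)⁻¹ • vecMulVec b (star b)).PosSemidef := by
  set r := star w ⬝ᵥ b
  have hr : IsSelfAdjoint r := .of_nonneg (by simpa [r, hw] using hA.dotProduct_mulVec_nonneg w)
  have hrr : r⁻¹ * r * r⁻¹ = r⁻¹ := by simpa using mul_inv_mul_cancel r⁻¹
  have hwA : star w ᵥ* A = star b := by rw [← hw, star_mulVec, hA.1.eq]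
  refine .of_dotProduct_mulVec_nonneg
    (hA.1.sub ((posSemidef_vecMulVec_self_star b).1.smul hr.inv₀)) fun v => ?_
  set β := star b ⬝ᵥ v with hβdef
  have hβ : star v ⬝ᵥ b = star β := by rw [star_dotProduct]
  have hwAv : star w ⬝ᵥ A *ᵥ v = β := by rw [dotProduct_mulVec, hwA]
  -- `u` is `v` minus its `A`-orthogonal projection onto `w`
  set u := v - (r⁻¹ * β) • w
  have key : star v ⬝ᵥ (A - r⁻¹ • vecMulVec b (star b)) *ᵥ v = star u ⬝ᵥ A *ᵥ u := by
    have hstar : star u = star v - (star β * r⁻¹) • star w := by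
      simp [u, star_mul', hr.inv₀.star_eq, mul_comm]
    rw [hstar, mulVec_sub, mulVec_smul, hw, sub_mulVec, smul_mulVec, vecMulVec_mulVec]
    simp only [dotProduct_sub, sub_dotProduct, dotProduct_smul, smul_dotProduct,
      hwAv, hβ, ← hβdef, smul_eq_mul, MulOpposite.smul_eq_mul_unop,
      MulOpposite.unop_op]
    linear_combination (-(β * star β)) * hrr
  exact key ▸ hA.dotProduct_mulVec_nonneg u

theorem IsHermitian.exists_mulVec_eq [DecidableEq n] {A : Matrix n n 𝕜} (hA : A.IsHermitian)
    {x : n → 𝕜} (hx : ∀ y, A *ᵥ y = 0 → star y ⬝ᵥ x = 0) : ∃ w, A *ᵥ w = x := by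
  have hT := isSymmetric_toEuclideanLin_iff.2 hA
  have hmem : WithLp.toLp 2 x ∈ LinearMap.range A.toEuclideanLin := by
    rw [← Submodule.orthogonal_orthogonal (LinearMap.range _), hT.orthogonal_range]
    intro y hy
    rw [LinearMap.mem_ker] at hy
    rw [EuclideanSpace.inner_eq_star_dotProduct, dotProduct_comm]
    exact hx _ (congrArg WithLp.ofLp hy)
  obtain ⟨w, hw⟩ := hmem
  exact ⟨WithLp.ofLp w, congrArg WithLp.ofLp hw⟩

theorem PosSemidef.exists_pos_posSemidef_sub_diagonal_single [DecidableEq n] {A : Matrix n n 𝕜}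
    (hA : A.PosSemidef) {w : n → 𝕜} {i : n} (hw : A *ᵥ w = Pi.single i 1) :
    ∃ x : ℝ, 0 < x ∧ (A - diagonal (Pi.single i (x : 𝕜))).PosSemidef := by
  have hr : 0 < star w ⬝ᵥ Pi.single i 1 := by
    rw [← hw]
    refine (hA.dotProduct_mulVec_nonneg w).lt_of_ne' fun h => ?_
    simpa [hw] using (hA.dotProduct_mulVec_zero_iff w).1 h
  obtain ⟨x, hx, hxr⟩ := RCLike.pos_iff_exists_ofReal.1 hr
  refine ⟨x⁻¹, inv_pos.2 hx, ?_⟩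
  convert hA.sub_inv_smul_vecMulVec hw using 2
  rw [← hxr]
  ext j k
  simp only [diagonal_apply, Pi.single_apply, smul_apply, vecMulVec_apply, Pi.star_apply]
  split_ifs <;> simp_all

end Matrix

section coherenceWeight

variable {n : Type*} [Fintype n] [DecidableEq n] {ρ : Matrix n n ℂ}

theorem sum_le_one_sub_coherenceWeight {lam : n → ℝ} (hlam : ∀ i, 0 ≤ lam i)
    (h : (ρ - diagonal (fun i => (lam i : ℂ))).PosSemidef) :
    ∑ i, lam i ≤ 1 - coherenceWeight ρ := by
  rw [coherenceWeight, sub_sub_cancel]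
  refine le_csSup ⟨ρ.trace.re, ?_⟩ ⟨lam, hlam, rfl, h⟩
  rintro _ ⟨l, -, rfl, hl⟩
  simpa [trace_sub, trace_diagonal] using (Complex.le_def.1 hl.trace_nonneg).1

theorem coherenceWeight_lt_one_of_posSemidef_sub_diagonal_single {i : n} {x : ℝ} (hx : 0 < x)
    (h : (ρ - diagonal (Pi.single i (x : ℂ))).PosSemidef) : coherenceWeight ρ < 1 := by
  have hsingle : (fun j => ((Pi.single i x : n → ℝ) j : ℂ)) = Pi.single i (x : ℂ) :=
    funext (Pi.apply_single (fun _ (t : ℝ) => (t : ℂ)) (fun _ => Complex.ofReal_zero) i x)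
  have hsum := sum_le_one_sub_coherenceWeight (lam := Pi.single i x)
    (fun j => by by_cases hj : j = i <;> simp [hj, hx.le]) (hsingle ▸ h)
  simp only [Finset.sum_pi_single', Finset.mem_univ, if_true] at hsum
  linarith

end coherenceWeight

theorem stmt_16_general (ρ : Matrix (Fin 3) (Fin 3) ℂ)
    (hpsd : ρ.PosSemidef) (hrank : ρ.rank = 2)
    (ψ0 : Fin 3 → ℂ) (hψ0 : star ψ0 ⬝ᵥ ψ0 = 1) (hker : ρ *ᵥ ψ0 = 0)
    (hCw : coherenceWeight ρ = 1) :
    ∀ i, ψ0 i ≠ 0 := by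
  intro i hi
  have hψ0ne : ψ0 ≠ 0 := by
    rintro rfl
    simp at hψ0
  have hkerρ := ker_mulVecLin_eq_span_singleton (by simp [hrank]) hker hψ0ne
  obtain ⟨w, hw⟩ := hpsd.1.exists_mulVec_eq (x := Pi.single i 1) fun y hy => by
    have hy' : y ∈ ℂ ∙ ψ0 := hkerρ ▸ hy
    obtain ⟨c, rfl⟩ := Submodule.mem_span_singleton.1 hy'
    simp [hi]
  obtain ⟨x, hx, hsub⟩ := hpsd.exists_pos_posSemidef_sub_diagonal_single hw
  exact (coherenceWeight_lt_one_of_posSemidef_sub_diagonal_single hx hsub).ne hCw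

theorem stmt_16 (ρ : Matrix (Fin 3) (Fin 3) ℂ)
    (hpsd : ρ.PosSemidef) (htr : ρ.trace = 1) (hrank : ρ.rank = 2)
    (ψ0 : Fin 3 → ℂ) (hψ0 : star ψ0 ⬝ᵥ ψ0 = 1) (hker : ρ *ᵥ ψ0 = 0)
    (hCw : coherenceWeight ρ = 1) :
    ∀ i, ψ0 i ≠ 0 :=
  stmt_16_general ρ hpsd hrank ψ0 hψ0 hker hCw
end
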